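/- For every L ≥ 2 and all J, q > 0, setting δ = e^{−2q}, φ_x(σ) = exp(−2J(σ_x σ_{x^u} + σ_x σ_{x^r})) and f(σ) = ∏_{x∈Λ}(1 + δ φ_x(σ)), one has the identity Z_σ = e^{q L²} e^{−H_G(σ)} f(σ) for every σ ∈ S, and consequently π_PCA(σ) = π_G(σ) f(σ) / π_G(f), where π_G(f) = ∑_{σ∈S} π_G(σ) f(σ). -/

import Mathlib

open Real Filter MeasureTheory

noncomputable section

/-- A site of the 2d discrete torus `(ℤ/Lℤ)²`. -/
abbrev Site (L : ℕ) := ZMod L × ZMod L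

/-- A spin configuration on the torus, `true = +1`, `false = -1`. -/
abbrev Cfg (L : ℕ) := Site L → Bool

/-- The real spin value of a Boolean spin. -/
def spin (b : Bool) : ℝ := if b then 1 else -1

/-- The up neighbor. -/
def upN {L : ℕ} (x : Site L) : Site L := (x.1, x.2 + 1)
/-- The right neighbor. -/
def rtN {L : ℕ} (x : Site L) : Site L := (x.1 + 1, x.2)
/-- The down neighbor. -/
def dnN {L : ℕ} (x : Site L) : Site L := (x.1, x.2 - 1)
/-- The left neighbor. -/
def lfN {L : ℕ} (x : Site L) : Site L := (x.1 - 1, x.2)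

/-- The pair Hamiltonian `H(σ,τ) = −∑_x [J σ_x (τ_{x^u} + τ_{x^r}) + q σ_x τ_x]`. -/
def pairH (L : ℕ) [NeZero L] (J q : ℝ) (σ τ : Cfg L) : ℝ :=
  - ∑ x : Site L, (J * spin (σ x) * (spin (τ (upN x)) + spin (τ (rtN x)))
      + q * spin (σ x) * spin (τ x))

/-- The normalization `Z_σ = ∑_τ e^{−H(σ,τ)}`. -/
def Zconf (L : ℕ) [NeZero L] (J q : ℝ) (σ : Cfg L) : ℝ :=
  ∑ τ : Cfg L, Real.exp (-(pairH L J q σ τ))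

/-- The PCA transition probabilities `P(σ,τ) = e^{−H(σ,τ)}/Z_σ`. -/
def Ptrans (L : ℕ) [NeZero L] (J q : ℝ) (σ τ : Cfg L) : ℝ :=
  Real.exp (-(pairH L J q σ τ)) / Zconf L J q σ

/-- `Z_PCA = ∑_σ Z_σ`. -/
def Zpca (L : ℕ) [NeZero L] (J q : ℝ) : ℝ := ∑ σ : Cfg L, Zconf L J q σ

/-- The PCA stationary measure `π_PCA(σ) = Z_σ / Z_PCA`. -/
def piPCA (L : ℕ) [NeZero L] (J q : ℝ) (σ : Cfg L) : ℝ := Zconf L J q σ / Zpca L J q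

/-- The Ising Hamiltonian `H_G(σ) = −J ∑_{(x,y)} σ_x σ_y`, the sum over (unordered)
nearest-neighbor pairs of the torus, each pair being counted once via its up/right bond. -/
def isingH (L : ℕ) [NeZero L] (J : ℝ) (σ : Cfg L) : ℝ :=
  - J * ∑ x : Site L, spin (σ x) * (spin (σ (upN x)) + spin (σ (rtN x)))

/-- The Ising partition function. -/
def Zg (L : ℕ) [NeZero L] (J : ℝ) : ℝ := ∑ σ : Cfg L, Real.exp (-(isingH L J σ))

/-- The Ising Gibbs measure `π_G(σ) = e^{−H_G(σ)}/Z_G`. -/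
def piG (L : ℕ) [NeZero L] (J : ℝ) (σ : Cfg L) : ℝ := Real.exp (-(isingH L J σ)) / Zg L J

/-- Total variation distance between two measures on configuration space. -/
def tv (L : ℕ) [NeZero L] (μ ν : Cfg L → ℝ) : ℝ := (1/2) * ∑ σ : Cfg L, |μ σ - ν σ|

/-- The all-plus configuration. -/
def plusCfg (L : ℕ) : Cfg L := fun _ => true
/-- The all-minus configuration. -/
def minusCfg (L : ℕ) : Cfg L := fun _ => false

/-- `δ = e^{−2q}`. -/
def deltaQ (q : ℝ) : ℝ := Real.exp (-(2 * q))

/-- `φ_x(σ) = exp(−2J(σ_x σ_{x^u} + σ_x σ_{x^r}))`. -/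
def phiX (L : ℕ) [NeZero L] (J : ℝ) (σ : Cfg L) (x : Site L) : ℝ :=
  Real.exp (-(2 * J * (spin (σ x) * spin (σ (upN x)) + spin (σ x) * spin (σ (rtN x)))))

/-- `f(σ) = ∏_x (1 + δ φ_x(σ))`. -/
def fDens (L : ℕ) [NeZero L] (J q : ℝ) (σ : Cfg L) : ℝ :=
  ∏ x : Site L, (1 + deltaQ q * phiX L J σ x)

/-!
Since `τ` enters `H(σ,τ)` linearly, `−H(σ,τ) = ∑_y τ_y a_y` with local field
`a_y = q σ_y + J σ_{y^d} + J σ_{y^l}`, so `Z_σ = ∏_y (e^{a_y} + e^{−a_y})`. Factoring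
`e^{σ_y a_y}` out of each factor gives `e^{qL²} e^{−H_G(σ)} ∏_y (1 + δ e^{−2J e_y})` with the
down-left bond energies `e_y = σ_y σ_{y^d} + σ_y σ_{y^l}`. This product equals `f(σ)`, which is
built from the up-right bond energies instead: both take values in `{−2, 0, 2}`, where
`log (1 + δ e^{−2J e})` is a quadratic polynomial in `e`, and by translation invariance of the
torus both families have the same sum and the same sum of squares.
-/

lemma spin_mul_self (b : Bool) : spin b * spin b = 1 := by
  cases b <;> simp [spin]

lemma spin_eq_one_or_neg_one (b : Bool) : spin b = 1 ∨ spin b = -1 := by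
  cases b <;> simp [spin]

lemma exp_add_exp_neg_eq_exp_spin_mul (a : ℝ) (b : Bool) :
    Real.exp a + Real.exp (-a) = Real.exp (spin b * a) * (1 + Real.exp (-(2 * (spin b * a)))) := by
  rw [mul_add, mul_one, ← Real.exp_add]
  rcases spin_eq_one_or_neg_one b with h | h <;> rw [h] <;> ring_nf

lemma sq_spin_mul_add_spin_mul (a b c : Bool) :
    (spin a * spin b + spin a * spin c) ^ 2 = 2 + 2 * (spin b * spin c) := by
  linear_combination (spin b * spin b + 2 * (spin b * spin c) + spin c * spin c) * spin_mul_self a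
    + spin_mul_self b + spin_mul_self c

lemma spin_mul_add_spin_mul_mem (a b c : Bool) :
    spin a * spin b + spin a * spin c = 2 ∨ spin a * spin b + spin a * spin c = 0 ∨
      spin a * spin b + spin a * spin c = -2 := by
  cases a <;> cases b <;> cases c <;> norm_num [spin]

lemma sum_exp_sum_spin_mul {ι : Type*} [Fintype ι] [DecidableEq ι] (a : ι → ℝ) :
    ∑ τ : ι → Bool, Real.exp (∑ i, spin (τ i) * a i) = ∏ i, (Real.exp (a i) + Real.exp (-a i)) := by
  simp only [Real.exp_sum]
  rw [← Fintype.prod_sum fun i (b : Bool) => Real.exp (spin b * a i)]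
  refine Finset.prod_congr rfl fun i _ => ?_
  simp [spin]

lemma prod_comp_eq_of_sum_eq_of_sum_sq_eq {ι : Type*} [Fintype ι] {g : ℝ → ℝ}
    (hg : ∀ e, 0 < g e) {d : ℝ} (hd : d ≠ 0) {E F : ι → ℝ}
    (hE : ∀ i, E i = d ∨ E i = 0 ∨ E i = -d) (hF : ∀ i, F i = d ∨ F i = 0 ∨ F i = -d)
    (h₁ : ∑ i, E i = ∑ i, F i) (h₂ : ∑ i, E i ^ 2 = ∑ i, F i ^ 2) :
    ∏ i, g (E i) = ∏ i, g (F i) := by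
  obtain ⟨a, b, c, hquad⟩ : ∃ a b c : ℝ,
      ∀ e, (e = d ∨ e = 0 ∨ e = -d) → g e = Real.exp (a * e ^ 2 + b * e + c) := by
    refine ⟨((Real.log (g d) + Real.log (g (-d))) / 2 - Real.log (g 0)) / d ^ 2,
      (Real.log (g d) - Real.log (g (-d))) / (2 * d), Real.log (g 0), ?_⟩
    rintro e (rfl | rfl | rfl)
    all_goals refine (Real.exp_log (hg _)).symm.trans (congrArg Real.exp ?_)
    · field_simp
      ring
    · simp
    · field_simp
      ring
  have hprod : ∀ G : ι → ℝ, (∀ i, G i = d ∨ G i = 0 ∨ G i = -d) →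
      ∏ i, g (G i) = Real.exp (a * ∑ i, G i ^ 2 + b * ∑ i, G i + Fintype.card ι * c) := by
    intro G hG
    rw [Finset.prod_congr rfl fun i _ => hquad _ (hG i), ← Real.exp_sum]
    simp only [Finset.sum_add_distrib, Finset.mul_sum, Finset.sum_const, Finset.card_univ, nsmul_eq_mul]
  rw [hprod E hE, hprod F hF, h₁, h₂]

lemma div_sum_eq_of_eq_const_mul_mul {ι : Type*} [Fintype ι] {Z w f : ι → ℝ} {c : ℝ}
    (hc : c ≠ 0) (hw : ∑ j, w j ≠ 0) (hZ : ∀ i, Z i = c * w i * f i) (i : ι) :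
    Z i / ∑ j, Z j = (w i / ∑ j, w j) * f i / ∑ j, (w j / ∑ k, w k) * f j := by
  simp_rw [hZ, mul_assoc, ← Finset.mul_sum, div_mul_eq_mul_div, ← Finset.sum_div]
  rw [mul_div_mul_left _ _ hc, div_div_div_cancel_right₀ hw]

section Neighbors

variable {L : ℕ}

lemma upN_eq_add (x : Site L) : upN x = x + (0, 1) := Prod.ext (add_zero x.1).symm rfl

lemma rtN_eq_add (x : Site L) : rtN x = x + (1, 0) := Prod.ext rfl (add_zero x.2).symm

@[simp] lemma dnN_upN (x : Site L) : dnN (upN x) = x := by simp [upN, dnN]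

@[simp] lemma lfN_rtN (x : Site L) : lfN (rtN x) = x := by simp [rtN, lfN]

lemma dnN_rtN_upN (x : Site L) : dnN (rtN (upN x)) = rtN x := by simp [upN, rtN, dnN]

lemma lfN_rtN_upN (x : Site L) : lfN (rtN (upN x)) = upN x := by simp [upN, rtN, lfN]

def localField (J q : ℝ) (σ : Cfg L) (y : Site L) : ℝ :=
  q * spin (σ y) + J * spin (σ (dnN y)) + J * spin (σ (lfN y))

def upRightBonds (σ : Cfg L) (x : Site L) : ℝ :=
  spin (σ x) * spin (σ (upN x)) + spin (σ x) * spin (σ (rtN x))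

def downLeftBonds (σ : Cfg L) (y : Site L) : ℝ :=
  spin (σ y) * spin (σ (dnN y)) + spin (σ y) * spin (σ (lfN y))

lemma spin_mul_localField (J q : ℝ) (σ : Cfg L) (y : Site L) :
    spin (σ y) * localField J q σ y = q + J * downLeftBonds σ y := by
  unfold localField downLeftBonds
  linear_combination q * spin_mul_self (σ y)

end Neighbors

section Torus

variable {L : ℕ} [NeZero L]

lemma sum_comp_upN {M : Type*} [AddCommMonoid M] (f : Site L → M) :
    ∑ x, f (upN x) = ∑ x, f x := by
  simp only [upN_eq_add]
  exact Equiv.sum_comp (Equiv.addRight _) f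

lemma sum_comp_rtN {M : Type*} [AddCommMonoid M] (f : Site L → M) :
    ∑ x, f (rtN x) = ∑ x, f x := by
  simp only [rtN_eq_add]
  exact Equiv.sum_comp (Equiv.addRight _) f

lemma neg_pairH_eq_sum (J q : ℝ) (σ τ : Cfg L) :
    -pairH L J q σ τ = ∑ y, spin (τ y) * localField J q σ y := by
  have hup := sum_comp_upN fun y => J * spin (σ (dnN y)) * spin (τ y)
  have hrt := sum_comp_rtN fun y => J * spin (σ (lfN y)) * spin (τ y)
  simp only [dnN_upN, lfN_rtN] at hup hrt
  simp only [pairH, neg_neg, mul_add, Finset.sum_add_distrib, hup, hrt]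
  rw [← Finset.sum_add_distrib, ← Finset.sum_add_distrib]
  exact Finset.sum_congr rfl fun y _ => by unfold localField; ring

lemma Zconf_eq_prod (J q : ℝ) (σ : Cfg L) :
    Zconf L J q σ = ∏ y, (Real.exp (localField J q σ y) + Real.exp (-localField J q σ y)) := by
  simp only [Zconf, neg_pairH_eq_sum]
  exact sum_exp_sum_spin_mul _

lemma sum_downLeftBonds (σ : Cfg L) : ∑ y, downLeftBonds σ y = ∑ x, upRightBonds σ x := by
  have hup := sum_comp_upN fun y => spin (σ y) * spin (σ (dnN y))
  have hrt := sum_comp_rtN fun y => spin (σ y) * spin (σ (lfN y))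
  simp only [dnN_upN, lfN_rtN] at hup hrt
  simp only [downLeftBonds, upRightBonds, Finset.sum_add_distrib, ← hup, ← hrt, mul_comm]

lemma sum_downLeftBonds_sq (σ : Cfg L) :
    ∑ y, downLeftBonds σ y ^ 2 = ∑ x, upRightBonds σ x ^ 2 := by
  rw [← sum_comp_rtN fun y => downLeftBonds σ y ^ 2, ← sum_comp_upN]
  simp only [downLeftBonds, upRightBonds, sq_spin_mul_add_spin_mul, dnN_rtN_upN, lfN_rtN_upN]
  exact Finset.sum_congr rfl fun x _ => by ring

lemma isingH_eq (J : ℝ) (σ : Cfg L) : isingH L J σ = -(J * ∑ x, upRightBonds σ x) := by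
  simp only [isingH, upRightBonds, mul_add, neg_mul]

lemma fDens_eq_prod_downLeftBonds (J q : ℝ) (σ : Cfg L) :
    fDens L J q σ = ∏ y, (1 + deltaQ q * Real.exp (-(2 * J * downLeftBonds σ y))) :=
  (prod_comp_eq_of_sum_eq_of_sum_sq_eq (g := fun e => 1 + deltaQ q * Real.exp (-(2 * J * e)))
    (fun e => by unfold deltaQ; positivity) two_ne_zero
    (fun y => spin_mul_add_spin_mul_mem _ _ _) (fun x => spin_mul_add_spin_mul_mem _ _ _)
    (sum_downLeftBonds σ) (sum_downLeftBonds_sq σ)).symm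

lemma Zconf_eq (J q : ℝ) (σ : Cfg L) :
    Zconf L J q σ = Real.exp (q * (L : ℝ) ^ 2) * Real.exp (-isingH L J σ) * fDens L J q σ := by
  rw [Zconf_eq_prod, Finset.prod_congr rfl fun y _ => exp_add_exp_neg_eq_exp_spin_mul _ (σ y)]
  simp_rw [spin_mul_localField, Finset.prod_mul_distrib, ← Real.exp_sum]
  have hexp : ∑ y, (q + J * downLeftBonds σ y) = q * (L : ℝ) ^ 2 + -isingH L J σ := by
    simp only [Finset.sum_add_distrib, Finset.sum_const, Finset.card_univ, Fintype.card_prod,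
      ZMod.card, nsmul_eq_mul, Nat.cast_mul, ← Finset.mul_sum, sum_downLeftBonds, isingH_eq, neg_neg]
    ring
  have hdens : ∏ y, (1 + Real.exp (-(2 * (q + J * downLeftBonds σ y)))) = fDens L J q σ := by
    rw [fDens_eq_prod_downLeftBonds]
    refine Finset.prod_congr rfl fun y _ => ?_
    rw [deltaQ, ← Real.exp_add]
    ring_nf
  rw [hexp, hdens, Real.exp_add]

end Torus

theorem stmt8 (L : ℕ) [NeZero L] (J q : ℝ) :
    (∀ σ : Cfg L,
      Zconf L J q σ = Real.exp (q * (L : ℝ) ^ 2) * Real.exp (-(isingH L J σ)) * fDens L J q σ) ∧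
    (∀ σ : Cfg L,
      piPCA L J q σ =
        piG L J σ * fDens L J q σ / (∑ τ : Cfg L, piG L J τ * fDens L J q τ)) :=
  ⟨Zconf_eq J q, div_sum_eq_of_eq_const_mul_mul (Real.exp_pos _).ne'
    (Finset.sum_pos (fun _ _ => Real.exp_pos _) Finset.univ_nonempty).ne' (Zconf_eq J q)⟩
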